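/- arXiv:1301.3655 — 5 statements merged into one kernel-verified Lean document; each statement's English description precedes it below -/
import Mathlib

section
/- Let f(x) = α_k x^k + ... + α_1 x be an integer polynomial of degree k ≥ 1 with zero constant term and content c(f) = 1 (a primitive polynomial), let l be the smallest index with α_l ≠ 0, let d ≥ 1 be an integer, and let g(x) = f(dx). Then the content of g satisfies c(g) ≤ d^l · gcd(d, α_l)^{k−l}. -/
/-- Let `f(x) = α_k x^k + ... + α_1 x` be a primitive integer
polynomial of degree `k ≥ 1` with zero constant term (content `c(f) = 1`), `l` the
smallest index with `α_l ≠ 0`, `d ≥ 1` an integer, and `g(x) = f(dx)`. Then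
`c(g) ≤ d^l gcd(d, α_l)^{k-l}`, where `c(g)` is the gcd of the coefficients
`α_i d^i` of `g`. -/
theorem stmt_7 (k l d : ℕ) (hk : 1 ≤ k) (hd : 1 ≤ d) (α : ℕ → ℤ)
    (hαk : α k ≠ 0) (hα0 : α 0 = 0)
    (hl : α l ≠ 0) (hlmin : ∀ i, i < l → α i = 0)
    (hprim : Finset.gcd (Finset.Icc 1 k) α = 1) :
    Finset.gcd (Finset.Icc 1 k) (fun i => α i * (d : ℤ) ^ i) ≤
      (d : ℤ) ^ l * (Int.gcd (d : ℤ) (α l) : ℤ) ^ (k - l) := by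
  have hl1 : 1 ≤ l := by
    rcases Nat.eq_zero_or_pos l with h | h
    · exact absurd (h ▸ hα0) (h ▸ hl)
    · exact h
  have hlk : l ≤ k := by
    by_contra h
    exact hαk (hlmin k (Nat.lt_of_not_le h))
  set G := Finset.gcd (Finset.Icc 1 k) (fun i => α i * (d : ℤ) ^ i) with hG
  have hdpos : (0 : ℤ) < (d : ℤ) := by exact_mod_cast hd
  -- G divides d^k
  have hGdk : G ∣ (d : ℤ) ^ k := by
    have h1 : G ∣ Finset.gcd (Finset.Icc 1 k) (fun i => α i * (d : ℤ) ^ k) := by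
      apply Finset.dvd_gcd
      intro i hi
      have hik : i ≤ k := (Finset.mem_Icc.mp hi).2
      have : (d : ℤ) ^ i ∣ (d : ℤ) ^ k := pow_dvd_pow _ hik
      exact (Finset.gcd_dvd hi).trans (mul_dvd_mul_left (α i) this)
    rwa [Finset.gcd_mul_right, hprim, one_mul,
      Int.normalize_of_nonneg (by positivity)] at h1
  -- G divides α_l * d^l
  have hGl : G ∣ α l * (d : ℤ) ^ l :=
    Finset.gcd_dvd (Finset.mem_Icc.mpr ⟨hl1, hlk⟩)
  -- hence G divides gcd (d^k) (α_l * d^l) = d^l * gcd (d^(k-l)) (α l)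
  have hGg : G ∣ (d : ℤ) ^ l * gcd ((d : ℤ) ^ (k - l)) (α l) := by
    have := dvd_gcd hGdk hGl
    have hkeq : (d : ℤ) ^ k = (d : ℤ) ^ (k - l) * (d : ℤ) ^ l := by
      rw [← pow_add, Nat.sub_add_cancel hlk]
    rw [hkeq, gcd_mul_right, Int.normalize_of_nonneg (by positivity), mul_comm] at this
    exact this
  have hpow : gcd ((d : ℤ) ^ (k - l)) (α l) ∣ (gcd (d : ℤ) (α l)) ^ (k - l) :=
    gcd_pow_left_dvd_pow_gcd
  have hdvd : G ∣ (d : ℤ) ^ l * (Int.gcd (d : ℤ) (α l) : ℤ) ^ (k - l) := by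
    rw [Int.coe_gcd]
    exact hGg.trans (mul_dvd_mul_left _ hpow)
  refine Int.le_of_dvd ?_ hdvd
  have : 0 < Int.gcd (d : ℤ) (α l) := Int.gcd_pos_of_ne_zero_right _ hl
  positivity
end

section
/- Let f(x) = α_k x^k + ... + α_1 x be an odd integer polynomial of degree k ≥ 3. There exists a constant C > 0 depending only on f such that for all integers n, d ≥ 1 with α_k d^k ≤ n, the normalizing constant K = 2 ∑_{j ≥ 1, α_k (dj)^k ≤ n} α_k k d^k j^{k−1} (1/n − α_k (dj)^k / n²) satisfies |K − 1| ≤ C d n^{−1/k}. -/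
/-!
The summation range is `{1, …, M}` with `M` maximal such that `β M^k ≤ 1`, where
`β = α_k d^k / n`, and then `K = 2 β S - β² T` with `S = ∑ k j^(k-1)` and `T = ∑ 2k j^(2k-1)`.
Comparing `k j^(k-1)` with the increments of `j^k` brackets `β S` between `x = β M^k ≤ 1` and
`y = β (M+1)^k > 1`, and `β² T` between `x²` and `y²`; this forces `|K - 1| ≤ 2ε + 2ε²` with
`ε = y - x`. Writing `β = r^k` we have `r M ≤ 1`, so the mean value bound gives
`ε = (r (M+1))^k - (r M)^k ≤ k 2^(k-1) r`, and `r = (α_k d^k / n)^(1/k) ≤ α_k d n^(-1/k)`.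
-/

open Finset

/-- The normalizing constant
`K = 2 ∑_{j ≥ 1, α_k (dj)^k ≤ n} α_k k d^k j^{k-1} (1/n − α_k (dj)^k / n²)`.
(Since `α_k ≥ 1` and `d ≥ 1`, every index `j` with `α_k (dj)^k ≤ n` satisfies
`j ≤ n`, so the index set is exactly the filtered interval below.) -/
noncomputable def Kconst (k : ℕ) (α : ℕ → ℤ) (n d : ℕ) : ℝ :=
  2 * ∑ j ∈ (Finset.Icc 1 n).filter (fun j => α k * ((d * j : ℕ) : ℤ) ^ k ≤ (n : ℤ)),
      (α k : ℝ) * (k : ℝ) * (d : ℝ) ^ k * (j : ℝ) ^ (k - 1) *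
        (1 / (n : ℝ) - (α k : ℝ) * ((d * j : ℕ) : ℝ) ^ k / (n : ℝ) ^ 2)

section OrderedRing

variable {R : Type*} [CommRing R] [LinearOrder R] [IsStrictOrderedRing R] {a b : R}

theorem mul_pow_sub_one_mul_le_pow_sub_pow (hb : 0 ≤ b) (hba : b ≤ a) (n : ℕ) :
    n * b ^ (n - 1) * (a - b) ≤ a ^ n - b ^ n := by
  rw [← geom_sum₂_mul]
  refine mul_le_mul_of_nonneg_right ?_ (sub_nonneg.2 hba)
  calc (n : R) * b ^ (n - 1) = ∑ i ∈ range n, b ^ i * b ^ (n - 1 - i) := by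
        rw [sum_congr rfl fun i hi => by rw [← pow_add, Nat.add_sub_cancel' (by grind)]]
        simp
    _ ≤ ∑ i ∈ range n, a ^ i * b ^ (n - 1 - i) := by gcongr

theorem pow_sub_pow_le_mul_pow_sub_one_mul (hb : 0 ≤ b) (hba : b ≤ a) (n : ℕ) :
    a ^ n - b ^ n ≤ n * a ^ (n - 1) * (a - b) := by
  have h := abs_pow_sub_pow_le a b n
  rwa [abs_of_nonneg (sub_nonneg.2 hba), abs_of_nonneg (hb.trans hba), abs_of_nonneg hb,
    max_eq_left hba, abs_of_nonneg (sub_nonneg.2 (pow_le_pow_left₀ hb hba n)), mul_comm (a - b),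
    mul_right_comm] at h

theorem pow_le_sum_Icc_mul_pow_sub_one {k : ℕ} (hk : k ≠ 0) (M : ℕ) :
    (M : R) ^ k ≤ ∑ j ∈ Icc 1 M, k * (j : R) ^ (k - 1) := by
  induction M with
  | zero => simp [hk]
  | succ M ih =>
    have h := pow_sub_pow_le_mul_pow_sub_one_mul (M.cast_nonneg' : (0 : R) ≤ M)
      (by simp : (M : R) ≤ M + 1) k
    rw [sum_Icc_succ_top (by omega)]
    push_cast
    linarith

theorem sum_Icc_mul_pow_sub_one_le (k M : ℕ) :
    ∑ j ∈ Icc 1 M, k * (j : R) ^ (k - 1) ≤ ((M : R) + 1) ^ k - 1 := by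
  induction M with
  | zero => simp
  | succ M ih =>
    have h := mul_pow_sub_one_mul_le_pow_sub_pow (by positivity : (0 : R) ≤ M + 1)
      (by simp : (M : R) + 1 ≤ M + 1 + 1) k
    rw [sum_Icc_succ_top (by omega)]
    push_cast
    linarith

theorem abs_two_mul_sub_sub_one_le {u v x y : R} (hx₁ : x ≤ 1) (hy : 1 < y)
    (hxu : x ≤ u) (huy : u ≤ y) (hxv : x ^ 2 ≤ v) (hvy : v ≤ y ^ 2) :
    |2 * u - v - 1| ≤ 2 * (y - x) + 2 * (y - x) ^ 2 := by
  rw [abs_le]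
  constructor <;> nlinarith

theorem pow_mul_add_one_pow_sub_pow_le {r m : R} (hr₀ : 0 ≤ r) (hr₁ : r ≤ 1) (hm₀ : 0 ≤ m)
    (hrm : r * m ≤ 1) (k : ℕ) :
    r ^ k * ((m + 1) ^ k - m ^ k) ≤ k * 2 ^ (k - 1) * r := by
  have h := pow_sub_pow_le_mul_pow_sub_one_mul (mul_nonneg hr₀ hm₀)
    (by nlinarith : r * m ≤ r * (m + 1)) k
  have h2 : (r * (m + 1)) ^ (k - 1) ≤ 2 ^ (k - 1) :=
    pow_le_pow_left₀ (by positivity) (by linarith) _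
  calc r ^ k * ((m + 1) ^ k - m ^ k) = (r * (m + 1)) ^ k - (r * m) ^ k := by
        rw [mul_sub, mul_pow, mul_pow]
    _ ≤ k * (r * (m + 1)) ^ (k - 1) * (r * (m + 1) - r * m) := h
    _ = k * (r * (m + 1)) ^ (k - 1) * r := by ring
    _ ≤ k * 2 ^ (k - 1) * r := by gcongr

end OrderedRing

theorem abs_two_mul_sum_sub_sq_mul_sum_sub_one_le {k M : ℕ} (hk : k ≠ 0) {β : ℝ} (hβ₀ : 0 < β)
    (hβ₁ : β ≤ 1) (hM : β * M ^ k ≤ 1) (hM₁ : 1 < β * (M + 1) ^ k) :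
    |2 * β * ∑ j ∈ Icc 1 M, k * (j : ℝ) ^ (k - 1) -
        β ^ 2 * ∑ j ∈ Icc 1 M, ((2 * k : ℕ) : ℝ) * (j : ℝ) ^ (2 * k - 1) - 1| ≤
      (2 * (k * 2 ^ (k - 1)) + 2 * (k * 2 ^ (k - 1)) ^ 2) * β ^ (k : ℝ)⁻¹ := by
  set B : ℝ := k * 2 ^ (k - 1)
  set r := β ^ (k : ℝ)⁻¹
  have hrk : r ^ k = β := Real.rpow_inv_natCast_pow hβ₀.le hk
  have hr₀ : 0 ≤ r := by positivity
  have hr₁ : r ≤ 1 := Real.rpow_le_one hβ₀.le hβ₁ (by positivity)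
  have hrM : r * M ≤ 1 :=
    (pow_le_one_iff_of_nonneg (by positivity) hk).1 (by rwa [mul_pow, hrk])
  have hε : β * (M + 1) ^ k - β * M ^ k ≤ B * r := by
    have h := pow_mul_add_one_pow_sub_pow_le hr₀ hr₁ M.cast_nonneg hrM k
    rwa [hrk, mul_sub] at h
  have hS₁ := pow_le_sum_Icc_mul_pow_sub_one (R := ℝ) hk M
  have hS₂ := sum_Icc_mul_pow_sub_one_le (R := ℝ) k M
  have hT₁ := pow_le_sum_Icc_mul_pow_sub_one (R := ℝ) (by omega : 2 * k ≠ 0) M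
  have hT₂ := sum_Icc_mul_pow_sub_one_le (R := ℝ) (2 * k) M
  have key := abs_two_mul_sub_sub_one_le (u := β * ∑ j ∈ Icc 1 M, k * (j : ℝ) ^ (k - 1))
    (v := β ^ 2 * ∑ j ∈ Icc 1 M, ((2 * k : ℕ) : ℝ) * (j : ℝ) ^ (2 * k - 1)) hM hM₁
    (by gcongr) (by nlinarith) (by rw [mul_pow, ← pow_mul, mul_comm k]; gcongr)
    (by rw [mul_pow, ← pow_mul, mul_comm k]; nlinarith)
  calc _ ≤ 2 * (β * (M + 1) ^ k - β * M ^ k) + 2 * (β * (M + 1) ^ k - β * M ^ k) ^ 2 := by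
        rwa [← mul_assoc] at key
    _ ≤ 2 * (B * r) + 2 * (B * r) ^ 2 := by gcongr; linarith
    _ ≤ (2 * B + 2 * B ^ 2) * r := by
        have hr₂ : r ^ 2 ≤ r := by nlinarith
        nlinarith [mul_le_mul_of_nonneg_left hr₂ (sq_nonneg B)]

theorem mul_pow_div_rpow_inv_le {A d n : ℝ} (hA : 1 ≤ A) (hd : 0 ≤ d) (hn : 0 < n) {k : ℕ}
    (hk : k ≠ 0) : (A * d ^ k / n) ^ (k : ℝ)⁻¹ ≤ A * d * n ^ (-(1 / (k : ℝ))) := by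
  rw [Real.div_rpow (by positivity) hn.le, Real.mul_rpow (by positivity) (by positivity),
    Real.pow_rpow_inv_natCast hd hk, Real.rpow_neg hn.le, one_div, div_eq_mul_inv]
  gcongr
  exact Real.rpow_le_self_of_one_le hA
    (inv_le_one_of_one_le₀ (by exact_mod_cast Nat.one_le_iff_ne_zero.2 hk))

theorem Finset.filter_Icc_one_eq_Icc_findGreatest {P : ℕ → Prop} [DecidablePred P]
    (hP : Antitone P) (n : ℕ) : (Icc 1 n).filter P = Icc 1 (Nat.findGreatest P n) := by
  ext j
  simp only [mem_filter, mem_Icc]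
  constructor
  · rintro ⟨⟨hj, hjn⟩, hPj⟩
    exact ⟨hj, Nat.le_findGreatest hjn hPj⟩
  · rintro ⟨hj, hjM⟩
    exact ⟨⟨hj, hjM.trans (Nat.findGreatest_le n)⟩,
      hP hjM (Nat.findGreatest_of_ne_zero rfl (by omega))⟩

theorem Nat.not_findGreatest_add_one {P : ℕ → Prop} [DecidablePred P] {n : ℕ}
    (hP : ∀ j, P j → j ≤ n) : ¬P (Nat.findGreatest P n + 1) := fun h =>
  Nat.findGreatest_is_greatest (Nat.lt_add_one _) (hP _ h) h

theorem le_of_mul_pow_le {a : ℤ} (ha : 0 < a) {d : ℕ} (hd : 1 ≤ d) {k : ℕ} (hk : k ≠ 0)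
    {j n : ℕ} (h : a * ((d * j : ℕ) : ℤ) ^ k ≤ n) : j ≤ n := by
  have hj : j ≤ (d * j) ^ k := (Nat.le_mul_of_pos_left j hd).trans (Nat.le_self_pow hk _)
  have : (j : ℤ) ≤ n :=
    calc (j : ℤ) ≤ ((d * j : ℕ) : ℤ) ^ k := by exact_mod_cast hj
      _ ≤ a * ((d * j : ℕ) : ℤ) ^ k := le_mul_of_one_le_left (by positivity) ha
      _ ≤ n := h
  exact_mod_cast this

theorem mul_pow_div_mul_pow_le_one_iff {a : ℤ} {n : ℕ} (hn : 0 < n) (k d j : ℕ) :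
    (a : ℝ) * d ^ k / n * j ^ k ≤ 1 ↔ a * ((d * j : ℕ) : ℤ) ^ k ≤ n := by
  rw [div_mul_eq_mul_div, div_le_one (by exact_mod_cast hn), mul_assoc, ← mul_pow]
  exact_mod_cast Iff.rfl

theorem Kconst_eq_findGreatest {k : ℕ} {α : ℕ → ℤ} (hlead : 0 ≤ α k) (n d : ℕ) :
    Kconst k α n d =
      2 * ((α k : ℝ) * d ^ k / n) *
          ∑ j ∈ Icc 1 (Nat.findGreatest (fun j => α k * ((d * j : ℕ) : ℤ) ^ k ≤ n) n),
            k * (j : ℝ) ^ (k - 1) -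
        ((α k : ℝ) * d ^ k / n) ^ 2 *
          ∑ j ∈ Icc 1 (Nat.findGreatest (fun j => α k * ((d * j : ℕ) : ℤ) ^ k ≤ n) n),
            ((2 * k : ℕ) : ℝ) * (j : ℝ) ^ (2 * k - 1) := by
  have hP : Antitone fun j => α k * ((d * j : ℕ) : ℤ) ^ k ≤ n := fun i j hij hj =>
    le_trans (by gcongr) hj
  rw [Kconst, filter_Icc_one_eq_Icc_findGreatest hP, mul_sum, mul_sum, mul_sum,
    ← sum_sub_distrib]
  refine sum_congr rfl fun j _ => ?_
  rw [show 2 * k - 1 = (k - 1) + k by omega]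
  push_cast
  ring

theorem stmt_8_general (k : ℕ) (hk : 3 ≤ k) (α : ℕ → ℤ)
    (hlead : 0 < α k) :
    ∃ C : ℝ, 0 < C ∧ ∀ n d : ℕ, 1 ≤ n → 1 ≤ d → α k * (d : ℤ) ^ k ≤ (n : ℤ) →
      |Kconst k α n d - 1| ≤ C * (d : ℝ) * (n : ℝ) ^ (-(1 / (k : ℝ))) := by
  have hk₀ : k ≠ 0 := by omega
  have hA : (1 : ℝ) ≤ α k := by exact_mod_cast hlead
  set B : ℝ := k * 2 ^ (k - 1)
  refine ⟨(2 * B + 2 * B ^ 2) * α k, by positivity, fun n d hn hd hdn => ?_⟩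
  set β : ℝ := α k * d ^ k / n
  set P : ℕ → Prop := fun j => α k * ((d * j : ℕ) : ℤ) ^ k ≤ n
  set M := Nat.findGreatest P n
  have hM : β * M ^ k ≤ 1 := (mul_pow_div_mul_pow_le_one_iff hn k d M).2
    (Nat.findGreatest_spec (Nat.zero_le n) (show P 0 by simp [P, hk₀]))
  have hM₁ : 1 < β * (M + 1) ^ k := by
    have := (mul_pow_div_mul_pow_le_one_iff hn k d (M + 1)).not.2
      (Nat.not_findGreatest_add_one fun _ => le_of_mul_pow_le hlead hd hk₀)
    push_cast at this
    linarith
  have hβ₁ : β ≤ 1 := by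
    simpa using (mul_pow_div_mul_pow_le_one_iff hn k d 1).2 (by simpa using hdn)
  rw [Kconst_eq_findGreatest hlead.le]
  calc _ ≤ (2 * B + 2 * B ^ 2) * β ^ (k : ℝ)⁻¹ :=
        abs_two_mul_sum_sub_sq_mul_sum_sub_one_le hk₀ (by positivity) hβ₁ hM hM₁
    _ ≤ (2 * B + 2 * B ^ 2) * (α k * d * (n : ℝ) ^ (-(1 / (k : ℝ)))) := by
        gcongr
        exact mul_pow_div_rpow_inv_le hA (by positivity) (by positivity) hk₀
    _ = _ := by ring

/-- For an odd integer polynomial of degree `k ≥ 3` there exists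
`C > 0` depending only on the polynomial such that for all `n, d ≥ 1` with
`α_k d^k ≤ n`, the normalizing constant satisfies `|K − 1| ≤ C d n^{-1/k}`. -/
theorem stmt_8 (k : ℕ) (hk : 3 ≤ k) (α : ℕ → ℤ)
    (hlead : 0 < α k) (hodd : ∀ j, Even j → α j = 0) :
    ∃ C : ℝ, 0 < C ∧ ∀ n d : ℕ, 1 ≤ n → 1 ≤ d → α k * (d : ℤ) ^ k ≤ (n : ℤ) →
      |Kconst k α n d - 1| ≤ C * (d : ℝ) * (n : ℝ) ^ (-(1 / (k : ℝ))) :=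
  stmt_8_general k hk α hlead
end

section
/- Fix reals α > 0 and 0 < β < 1 and an integer l ≥ 1, and define τ(d, q) = 1 if q divides d^l, and τ(d, q) = max{−α r^{−β}, −1} otherwise, where r = q / gcd(q, d^l). Then there exists a constant c_1 > 0 depending only on α and β such that for every δ ∈ (0, 1] there exist an integer s > 0, integers 1 = d_0 < d_1 < ... < d_s with d_s ≤ exp(c_1 δ^{−1/β}), and a real constant λ > 0, such that for every integer q ≥ 1, (1/Λ) ∑_{j=0}^{s} λ^j τ(d_j, q) ≥ −δ, where Λ = 1 + λ + ... + λ^s. -/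
/-- `τ(d, q) = 1` if `q ∣ d^l`, and `max{−a r^{−b}, −1}` otherwise, where
`r = q / gcd(q, d^l)`. -/
noncomputable def tau (a b : ℝ) (l d q : ℕ) : ℝ :=
  if q ∣ d ^ l then 1
  else max (-(a * ((q / Nat.gcd q (d ^ l) : ℕ) : ℝ) ^ (-b))) (-1)

/-!
Take the weights `λ = 3/4` and `d_j = ∏_{i=1}^{j} (M_i#)^L`, where the prime cutoffs
`M_i ≈ (8a/δ · (7/8)^i)^{1/b}` decrease geometrically, so that `log d_s ≪ L ∑ M_i ≪ δ^{-1/b}`,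
and `L` is so large that `2^{-bL} ≤ 1/(8(1+a))`. A prime `p ≤ M_k` has valuation `L j` in `d_j`
for `j ≤ k`, so if `l L k < v_p(q)` then `r_j ≥ p^{L(k-j)+1}` for `j ≤ k`: the negative values of
`τ` on the levels `j ≤ k` decay geometrically away from `k`, and cost at most `(6/5) λ^k`.

If `q ∣ d_s^l` and `k + 1` is the first level with `q ∣ d_{k+1}^l`, a prime witnessing
`q ∤ d_k^l` lies below `M_{k+1}`; the cost `(6/5) λ^k` is then paid for by the weights
`λ^{k+1} + λ^{k+2}` of levels where `τ = 1`, or is `O(λ^s) = O(δ)` when `k + 1 = s`.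
If `q ∤ d_s^l`, take `p` with `l v_p(d_s) < v_p(q)` and `k` the last level with `p ≤ M_k`.
Beyond `k` every `r_j ≥ p > M_j`, and `M_j` is chosen so that `λ^j a M_j^{-b} ≤ (δ/8) (6/7)^j`;
up to `k` the cost above carries the extra factor `a p^{-b} ≤ a M_{k+1}^{-b}`.
-/

open Finset

lemma tau_of_dvd {a b : ℝ} {l d q : ℕ} (h : q ∣ d ^ l) : tau a b l d q = 1 := if_pos h

lemma neg_one_le_tau (a b : ℝ) (l d q : ℕ) : -1 ≤ tau a b l d q := by
  unfold tau
  split_ifs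
  · norm_num
  · exact le_max_right _ _

lemma neg_mul_rpow_le_tau {a b t : ℝ} {l d q : ℕ} (ha : 0 ≤ a) (hb : 0 ≤ b) (ht : 0 < t)
    (htr : t ≤ (q / q.gcd (d ^ l) : ℕ)) : -(a * t ^ (-b)) ≤ tau a b l d q := by
  unfold tau
  split_ifs
  · have : 0 ≤ a * t ^ (-b) := by positivity
    linarith
  · refine le_trans ?_ (le_max_left _ _)
    exact neg_le_neg (mul_le_mul_of_nonneg_left
      (Real.rpow_le_rpow_of_nonpos ht htr (neg_nonpos.mpr hb)) ha)

lemma Nat.factorization_primorial {p : ℕ} (hp : p.Prime) (n : ℕ) :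
    (primorial n).factorization p = if p ≤ n then 1 else 0 := by
  split_ifs with h
  · exact Nat.factorization_eq_one_of_squarefree (squarefree_primorial n) hp
      (hp.dvd_primorial_iff.mpr h)
  · exact Nat.factorization_eq_zero_of_not_dvd (mt hp.dvd_primorial_iff.mp h)

lemma Nat.pow_le_div_gcd {p q D e : ℕ} (hp : p.Prime) (hq : q ≠ 0) (hD : D ≠ 0)
    (h : D.factorization p + e ≤ q.factorization p) : p ^ e ≤ q / q.gcd D := by
  have hr : q / q.gcd D ≠ 0 :=
    (Nat.div_pos (Nat.gcd_le_left D (Nat.pos_of_ne_zero hq)) (Nat.gcd_pos_of_pos_left D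
      (Nat.pos_of_ne_zero hq))).ne'
  refine Nat.le_of_dvd (Nat.pos_of_ne_zero hr) ((hp.pow_dvd_iff_le_factorization hr).mpr ?_)
  rw [Nat.factorization_div (Nat.gcd_dvd_left q D), Finsupp.tsub_apply,
    Nat.factorization_gcd hq hD, Finsupp.inf_apply]
  omega

lemma Nat.exists_prime_factorization_lt_of_not_dvd {q D : ℕ} (hq : q ≠ 0) (hD : D ≠ 0)
    (h : ¬ q ∣ D) : ∃ p, p.Prime ∧ D.factorization p < q.factorization p := by
  by_contra! hle
  exact h ((Nat.factorization_prime_le_iff_dvd hq hD).mp hle)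

def levelProd (M : ℕ → ℕ) (L j : ℕ) : ℕ := ∏ i ∈ Icc 1 j, primorial (M i) ^ L

section levelProd

variable {M : ℕ → ℕ} {L : ℕ}

@[simp] lemma levelProd_zero (M : ℕ → ℕ) (L : ℕ) : levelProd M L 0 = 1 := rfl

lemma levelProd_succ (M : ℕ → ℕ) (L j : ℕ) :
    levelProd M L (j + 1) = levelProd M L j * primorial (M (j + 1)) ^ L :=
  prod_Icc_succ_top (Nat.le_add_left 1 j) _

lemma levelProd_ne_zero (M : ℕ → ℕ) (L j : ℕ) : levelProd M L j ≠ 0 :=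
  prod_ne_zero_iff.mpr fun _ _ => pow_ne_zero L (primorial_ne_zero _)

lemma levelProd_dvd_levelProd (M : ℕ → ℕ) (L : ℕ) {i j : ℕ} (hij : i ≤ j) :
    levelProd M L i ∣ levelProd M L j :=
  prod_dvd_prod_of_subset _ _ _ (Icc_subset_Icc le_rfl hij)

lemma levelProd_lt_levelProd_succ (hL : 1 ≤ L) (hM : ∀ i, 2 ≤ M i) (j : ℕ) :
    levelProd M L j < levelProd M L (j + 1) := by
  rw [levelProd_succ]
  refine lt_mul_of_one_lt_right (Nat.pos_of_ne_zero (levelProd_ne_zero M L j)) ?_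
  calc 1 < M (j + 1) := hM _
    _ ≤ primorial (M (j + 1)) := le_primorial_self
    _ ≤ primorial (M (j + 1)) ^ L := Nat.le_self_pow (by omega) _

lemma factorization_levelProd_succ {p : ℕ} (hp : p.Prime) (j : ℕ) :
    (levelProd M L (j + 1)).factorization p =
      (levelProd M L j).factorization p + if p ≤ M (j + 1) then L else 0 := by
  rw [levelProd_succ, Nat.factorization_mul (levelProd_ne_zero M L j)
    (pow_ne_zero L (primorial_ne_zero _)), Finsupp.add_apply, Nat.factorization_pow,
    Finsupp.smul_apply, smul_eq_mul, Nat.factorization_primorial hp]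
  split_ifs <;> simp

lemma factorization_levelProd {p : ℕ} (hp : p.Prime) {j : ℕ} (hpM : ∀ i ∈ Icc 1 j, p ≤ M i) :
    (levelProd M L j).factorization p = L * j := by
  induction j with
  | zero => simp
  | succ j ih =>
    rw [factorization_levelProd_succ hp, ih fun i hi => hpM i (Icc_subset_Icc le_rfl
      (Nat.le_succ j) hi), if_pos (hpM (j + 1) (by simp))]
    ring

lemma levelProd_le_four_pow (M : ℕ → ℕ) (L j : ℕ) :
    levelProd M L j ≤ 4 ^ (L * ∑ i ∈ Icc 1 j, M i) := by
  rw [mul_sum, ← prod_pow_eq_pow_sum]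
  refine prod_le_prod' fun i _ => ?_
  rw [mul_comm, pow_mul]
  exact Nat.pow_le_pow_left (primorial_le_four_pow _) L

end levelProd

lemma sum_range_pow_mul_pow_sub_le {x u : ℝ} (hu : 0 ≤ u) (hux : u < x) (k : ℕ) :
    ∑ j ∈ range k, x ^ j * u ^ (k - j) ≤ x ^ k * (u / (x - u)) := by
  have hxu : 0 < x - u := sub_pos.mpr hux
  induction k with
  | zero => simpa using div_nonneg hu hxu.le
  | succ k ih =>
    have hshift : ∑ j ∈ range k, x ^ j * u ^ (k + 1 - j) =
        u * ∑ j ∈ range k, x ^ j * u ^ (k - j) := by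
      rw [mul_sum]
      refine sum_congr rfl fun j hj => ?_
      rw [Nat.sub_add_comm (mem_range.mp hj).le, pow_succ]
      ring
    rw [sum_range_succ, hshift, Nat.add_sub_cancel_left, pow_one]
    calc u * ∑ j ∈ range k, x ^ j * u ^ (k - j) + x ^ k * u
        ≤ u * (x ^ k * (u / (x - u))) + x ^ k * u := by gcongr
      _ = x ^ (k + 1) * (u / (x - u)) := by field_simp; ring

lemma neg_le_sum_range_succ_pow_mul {x u B C : ℝ} {f : ℕ → ℝ} {k : ℕ} (hu : 0 ≤ u) (hux : u < x)
    (hC : 0 ≤ C) (hk : -B ≤ f k) (hf : ∀ j < k, -(C * u ^ (k - j)) ≤ f j) :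
    -(x ^ k * (B + C * (u / (x - u)))) ≤ ∑ j ∈ range (k + 1), x ^ j * f j := by
  have hx : 0 ≤ x := hu.trans hux.le
  have hhead : -(C * (x ^ k * (u / (x - u)))) ≤ ∑ j ∈ range k, x ^ j * f j := by
    calc -(C * (x ^ k * (u / (x - u))))
        ≤ -(C * ∑ j ∈ range k, x ^ j * u ^ (k - j)) :=
          neg_le_neg (mul_le_mul_of_nonneg_left (sum_range_pow_mul_pow_sub_le hu hux k) hC)
      _ = ∑ j ∈ range k, x ^ j * -(C * u ^ (k - j)) := by
          rw [mul_sum, ← sum_neg_distrib]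
          exact sum_congr rfl fun j _ => by ring
      _ ≤ ∑ j ∈ range k, x ^ j * f j :=
          sum_le_sum fun j hj => mul_le_mul_of_nonneg_left (hf j (mem_range.mp hj)) (by positivity)
  have hlast : x ^ k * -B ≤ x ^ k * f k := mul_le_mul_of_nonneg_left hk (by positivity)
  rw [sum_range_succ]
  linarith

lemma mul_two_pow_rpow_neg {b : ℝ} (p L m : ℕ) :
    ((p : ℝ) * 2 ^ (L * m)) ^ (-b) = (p : ℝ) ^ (-b) * ((2 ^ (-b)) ^ L) ^ m := by
  rw [Real.mul_rpow (by positivity) (by positivity), ← pow_mul,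
    Real.rpow_pow_comm (by norm_num)]

section averaging

variable {a b δ : ℝ} {l L s q : ℕ} {M : ℕ → ℕ}

lemma neg_le_tau_levelProd (ha : 0 ≤ a) (hb : 0 ≤ b) (hl : 1 ≤ l) (hq : q ≠ 0) {p k j : ℕ}
    (hp : p.Prime) (hpM : ∀ i ∈ Icc 1 k, p ≤ M i) (hk : l * (L * k) < q.factorization p)
    (hj : j ≤ k) :
    -(a * (p : ℝ) ^ (-b) * ((2 ^ (-b)) ^ L) ^ (k - j)) ≤ tau a b l (levelProd M L j) q := by
  have hfac : (levelProd M L j ^ l).factorization p = l * (L * j) := by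
    rw [Nat.factorization_pow, Finsupp.smul_apply, smul_eq_mul,
      factorization_levelProd hp fun i hi => hpM i (Icc_subset_Icc le_rfl hj hi)]
  have hexp : (levelProd M L j ^ l).factorization p + (L * (k - j) + 1) ≤ q.factorization p := by
    have h1 : L * (k - j) ≤ l * (L * (k - j)) := Nat.le_mul_of_pos_left _ hl
    have h2 : l * (L * j) + l * (L * (k - j)) = l * (L * k) := by
      rw [← mul_add, ← mul_add, Nat.add_sub_cancel' hj]
    omega
  have hr := Nat.pow_le_div_gcd hp hq (pow_ne_zero l (levelProd_ne_zero M L j)) hexp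
  have hp0 : (0 : ℝ) < p := by exact_mod_cast hp.pos
  rw [mul_assoc, ← mul_two_pow_rpow_neg]
  refine neg_mul_rpow_le_tau ha hb (by positivity) ?_
  calc (p : ℝ) * 2 ^ (L * (k - j)) ≤ (p : ℝ) * (p : ℝ) ^ (L * (k - j)) := by
        gcongr; exact_mod_cast hp.two_le
    _ = ((p ^ (L * (k - j) + 1) : ℕ) : ℝ) := by push_cast; ring
    _ ≤ _ := by exact_mod_cast hr

lemma mul_div_three_quarters_sub_le {u : ℝ} (ha : 0 ≤ a) (hu0 : 0 ≤ u)
    (hu : 8 * (1 + a) * u ≤ 1) : (1 + a) * (u / (3 / 4 - u)) ≤ 1 / 5 := by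
  have h : 0 < 3 / 4 - u := by nlinarith
  rw [← mul_div_assoc, div_le_iff₀ h]
  nlinarith

lemma neg_le_sum_tau_of_prime (ha : 0 ≤ a) (hb : 0 ≤ b) (hl : 1 ≤ l) (hq : q ≠ 0) {p k : ℕ}
    (hp : p.Prime) (hpM : ∀ i ∈ Icc 1 k, p ≤ M i) (hk : l * (L * k) < q.factorization p)
    (hu : 8 * (1 + a) * (2 ^ (-b)) ^ L ≤ 1) :
    -(6 / 5 * (3 / 4) ^ k) ≤
      ∑ j ∈ range (k + 1), (3 / 4 : ℝ) ^ j * tau a b l (levelProd M L j) q := by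
  set u : ℝ := (2 ^ (-b)) ^ L
  have hu0 : 0 ≤ u := by positivity
  have hpb : (p : ℝ) ^ (-b) ≤ 1 :=
    Real.rpow_le_one_of_one_le_of_nonpos (by exact_mod_cast hp.one_le) (by linarith)
  have hsum := neg_le_sum_range_succ_pow_mul (x := 3 / 4) (C := a * (p : ℝ) ^ (-b))
    (f := fun j => tau a b l (levelProd M L j) q) hu0 (by nlinarith) (by positivity)
    (neg_one_le_tau a b l (levelProd M L k) q)
    fun j hj => neg_le_tau_levelProd ha hb hl hq hp hpM hk hj.le
  have hsmall := mul_div_three_quarters_sub_le ha hu0 hu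
  have : a * (p : ℝ) ^ (-b) * (u / (3 / 4 - u)) ≤ 1 / 5 := by
    refine le_trans (mul_le_mul_of_nonneg_right ?_ (div_nonneg hu0 (by nlinarith))) hsmall
    nlinarith
  nlinarith [pow_nonneg (by norm_num : (0 : ℝ) ≤ 3 / 4) k]

lemma neg_mul_rpow_le_sum_tau_of_prime (ha : 0 ≤ a) (hb : 0 ≤ b) (hl : 1 ≤ l) (hq : q ≠ 0)
    {p k : ℕ} (hp : p.Prime) (hpM : ∀ i ∈ Icc 1 k, p ≤ M i)
    (hk : l * (L * k) < q.factorization p) (hu : 8 * (1 + a) * (2 ^ (-b)) ^ L ≤ 1) :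
    -(6 / 5 * (3 / 4) ^ k * (a * (p : ℝ) ^ (-b))) ≤
      ∑ j ∈ range (k + 1), (3 / 4 : ℝ) ^ j * tau a b l (levelProd M L j) q := by
  set u : ℝ := (2 ^ (-b)) ^ L
  set C := a * (p : ℝ) ^ (-b)
  have hu0 : 0 ≤ u := by positivity
  have hC : 0 ≤ C := by positivity
  have hsum := neg_le_sum_range_succ_pow_mul (x := 3 / 4) (B := C)
    (f := fun j => tau a b l (levelProd M L j) q) hu0 (by nlinarith) hC
    (by simpa using neg_le_tau_levelProd ha hb hl hq hp hpM hk le_rfl)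
    fun j hj => neg_le_tau_levelProd ha hb hl hq hp hpM hk hj.le
  have hsmall : u / (3 / 4 - u) ≤ 1 / 5 :=
    le_trans (le_mul_of_one_le_left (div_nonneg hu0 (by nlinarith)) (by linarith))
      (mul_div_three_quarters_sub_le ha hu0 hu)
  nlinarith [mul_le_mul_of_nonneg_left hsmall
    (mul_nonneg (pow_nonneg (by norm_num : (0 : ℝ) ≤ 3 / 4) k) hC)]

lemma exists_prime_of_not_dvd_of_dvd_succ (hq : q ≠ 0) (hM : Antitone M) {k : ℕ}
    (hk : ¬ q ∣ levelProd M L k ^ l) (hk1 : q ∣ levelProd M L (k + 1) ^ l) :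
    ∃ p, p.Prime ∧ (∀ i ∈ Icc 1 k, p ≤ M i) ∧ l * (L * k) < q.factorization p := by
  have hdl : ∀ j, levelProd M L j ^ l ≠ 0 := fun j => pow_ne_zero l (levelProd_ne_zero M L j)
  obtain ⟨p, hp, hpk⟩ := Nat.exists_prime_factorization_lt_of_not_dvd hq (hdl k) hk
  have hpk1 := (Nat.factorization_le_iff_dvd hq (hdl (k + 1))).mpr hk1 p
  simp only [Nat.factorization_pow, Finsupp.smul_apply, smul_eq_mul,
    factorization_levelProd_succ hp] at hpk hpk1
  -- `p` must enter the product at level `k + 1`, otherwise `q ∣ d_{k+1}^l` would fail at `p`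
  have hpM : ∀ i ∈ Icc 1 k, p ≤ M i := by
    have : p ≤ M (k + 1) := by
      by_contra h
      rw [if_neg h, add_zero] at hpk1
      omega
    exact fun i hi => this.trans (hM (by simp only [mem_Icc] at hi; omega))
  exact ⟨p, hp, hpM, factorization_levelProd hp hpM ▸ hpk⟩

lemma neg_le_sum_tau_of_dvd (ha : 0 ≤ a) (hb : 0 ≤ b) (hl : 1 ≤ l) (hq : q ≠ 0)
    (hM : Antitone M) (hu : 8 * (1 + a) * (2 ^ (-b)) ^ L ≤ 1) (hs : (3 / 4 : ℝ) ^ s ≤ δ / 4)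
    (hdvd : q ∣ levelProd M L s ^ l) :
    -δ ≤ ∑ j ∈ range (s + 1), (3 / 4 : ℝ) ^ j * tau a b l (levelProd M L j) q := by
  classical
  have hex : ∃ j, q ∣ levelProd M L j ^ l := ⟨s, hdvd⟩
  have hτ : ∀ j, Nat.find hex ≤ j → tau a b l (levelProd M L j) q = 1 := fun j hj =>
    tau_of_dvd ((Nat.find_spec hex).trans (pow_dvd_pow_of_dvd (levelProd_dvd_levelProd M L hj) l))
  have hfind : Nat.find hex ≤ s := Nat.find_le hdvd
  rcases Nat.eq_zero_or_pos (Nat.find hex) with hfind0 | hfind0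
  · have : 0 ≤ ∑ j ∈ range (s + 1), (3 / 4 : ℝ) ^ j * tau a b l (levelProd M L j) q :=
      sum_nonneg fun j _ => by rw [hτ j (by omega), mul_one]; positivity
    nlinarith [pow_nonneg (by norm_num : (0 : ℝ) ≤ 3 / 4) s]
  obtain ⟨k, hk⟩ := Nat.exists_eq_add_one_of_ne_zero hfind0.ne'
  obtain ⟨p, hp, hpM, hpk⟩ := exists_prime_of_not_dvd_of_dvd_succ hq hM
    (Nat.find_min hex (by omega)) (hk ▸ Nat.find_spec hex)
  have hhead := neg_le_sum_tau_of_prime ha hb hl hq hp hpM hpk hu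
  have htail : ∑ j ∈ Ico (k + 1) (s + 1), (3 / 4 : ℝ) ^ j * tau a b l (levelProd M L j) q =
      ∑ j ∈ Ico (k + 1) (s + 1), (3 / 4 : ℝ) ^ j :=
    sum_congr rfl fun j hj => by rw [hτ j (by simp only [mem_Ico] at hj; omega), mul_one]
  rw [← sum_range_add_sum_Ico _ (show k + 1 ≤ s + 1 by omega), htail]
  have hx : (0 : ℝ) ≤ (3 / 4) ^ k := by positivity
  rcases (show k + 1 = s ∨ k + 3 ≤ s + 1 by omega) with hks | hks
  · have : 0 ≤ ∑ j ∈ Ico (k + 1) (s + 1), (3 / 4 : ℝ) ^ j := sum_nonneg fun j _ => by positivity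
    rw [← hks, pow_succ] at hs
    linarith
  · have h2 : ∑ j ∈ Ico (k + 1) (k + 3), (3 / 4 : ℝ) ^ j ≤
        ∑ j ∈ Ico (k + 1) (s + 1), (3 / 4 : ℝ) ^ j :=
      sum_le_sum_of_subset_of_nonneg (Ico_subset_Ico le_rfl hks) fun j _ _ => by positivity
    rw [sum_Ico_succ_top (by omega), sum_Ico_succ_top le_rfl, Ico_self, sum_empty] at h2
    simp only [pow_succ] at h2
    nlinarith [pow_nonneg (by norm_num : (0 : ℝ) ≤ 3 / 4) s]

lemma neg_le_sum_Ico_tau_of_lt_prime (ha : 0 ≤ a) (hb : 0 ≤ b) (hq : q ≠ 0) (hM : Antitone M)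
    (hM0 : ∀ i, 0 < M i) (hbud : ∀ i, a * (M i : ℝ) ^ (-b) ≤ δ / 8 * (8 / 7) ^ i) {p k : ℕ}
    (hp : p.Prime) (hMp : M (k + 1) < p)
    (hpj : ∀ j ≤ s, (levelProd M L j ^ l).factorization p < q.factorization p) :
    -(6 * (δ / 8)) ≤
      ∑ j ∈ Ico (k + 1) (s + 1), (3 / 4 : ℝ) ^ j * tau a b l (levelProd M L j) q := by
  have hδ : 0 ≤ δ / 8 := by
    have := hbud 0
    rw [pow_zero, mul_one] at this
    exact le_trans (by positivity) this
  have hterm : ∀ j ∈ Ico (k + 1) (s + 1),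
      -(δ / 8 * (6 / 7) ^ j) ≤ (3 / 4 : ℝ) ^ j * tau a b l (levelProd M L j) q := by
    intro j hj
    rw [mem_Ico] at hj
    have hr := Nat.pow_le_div_gcd hp hq (pow_ne_zero l (levelProd_ne_zero M L j))
      (e := 1) (by have := hpj j (by omega); omega)
    rw [pow_one] at hr
    have hMr : (M j : ℝ) ≤ (q / q.gcd (levelProd M L j ^ l) : ℕ) := by
      have := hM hj.1
      exact_mod_cast (by omega : M j ≤ q / q.gcd (levelProd M L j ^ l))
    have hτ := (neg_le_neg (hbud j)).trans
      (neg_mul_rpow_le_tau ha hb (by exact_mod_cast hM0 j) hMr)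
    calc -(δ / 8 * (6 / 7) ^ j) = (3 / 4) ^ j * -(δ / 8 * (8 / 7) ^ j) := by
          rw [show (6 / 7 : ℝ) = 3 / 4 * (8 / 7) by norm_num, mul_pow]; ring
      _ ≤ _ := mul_le_mul_of_nonneg_left hτ (by positivity)
  have hgeom : ∑ j ∈ Ico (k + 1) (s + 1), (6 / 7 : ℝ) ^ j ≤ 6 := by
    refine (geom_sum_Ico_le_of_lt_one (by norm_num) (by norm_num)).trans ?_
    have : (6 / 7 : ℝ) ^ k ≤ 1 := pow_le_one₀ (by norm_num) (by norm_num)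
    calc (6 / 7 : ℝ) ^ (k + 1) / (1 - 6 / 7) = 6 * (6 / 7) ^ k := by ring
      _ ≤ 6 := by linarith
  calc -(6 * (δ / 8)) ≤ -(δ / 8 * ∑ j ∈ Ico (k + 1) (s + 1), (6 / 7 : ℝ) ^ j) := by nlinarith
    _ = ∑ j ∈ Ico (k + 1) (s + 1), -(δ / 8 * (6 / 7) ^ j) := by rw [mul_sum, sum_neg_distrib]
    _ ≤ _ := sum_le_sum hterm

lemma neg_le_sum_tau_of_lt_prime (ha : 0 ≤ a) (hb : 0 ≤ b) (hl : 1 ≤ l) (hq : q ≠ 0)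
    (hM : Antitone M) (hM0 : ∀ i, 0 < M i) (hu : 8 * (1 + a) * (2 ^ (-b)) ^ L ≤ 1)
    (hbud : ∀ i, a * (M i : ℝ) ^ (-b) ≤ δ / 8 * (8 / 7) ^ i) {p k : ℕ} (hp : p.Prime)
    (hks : k < s) (hpM : ∀ i ∈ Icc 1 k, p ≤ M i) (hpk : l * (L * k) < q.factorization p)
    (hMp : M (k + 1) < p)
    (hpj : ∀ j ≤ s, (levelProd M L j ^ l).factorization p < q.factorization p) :
    -δ ≤ ∑ j ∈ range (s + 1), (3 / 4 : ℝ) ^ j * tau a b l (levelProd M L j) q := by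
  have hhead := neg_mul_rpow_le_sum_tau_of_prime ha hb hl hq hp hpM hpk hu
  have htail := neg_le_sum_Ico_tau_of_lt_prime ha hb hq hM hM0 hbud hp hMp hpj
  have hpbud : a * (p : ℝ) ^ (-b) ≤ δ / 8 * (8 / 7) ^ (k + 1) :=
    (mul_le_mul_of_nonneg_left (Real.rpow_le_rpow_of_nonpos (by exact_mod_cast hM0 _)
      (by exact_mod_cast hMp.le) (neg_nonpos.mpr hb)) ha).trans (hbud _)
  have hδ : 0 ≤ δ / 8 := le_trans (by positivity) (hbud 0) |>.trans_eq (by simp)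
  have hhead' : (3 / 4 : ℝ) ^ k * (a * (p : ℝ) ^ (-b)) ≤ δ / 8 * (8 / 7) := by
    have hpow : (3 / 4 * (8 / 7) : ℝ) ^ k ≤ 1 := pow_le_one₀ (by norm_num) (by norm_num)
    calc (3 / 4 : ℝ) ^ k * (a * (p : ℝ) ^ (-b)) ≤ (3 / 4) ^ k * (δ / 8 * (8 / 7) ^ (k + 1)) :=
          mul_le_mul_of_nonneg_left hpbud (by positivity)
      _ = δ / 8 * (8 / 7) * (3 / 4 * (8 / 7)) ^ k := by rw [mul_pow, pow_succ]; ring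
      _ ≤ δ / 8 * (8 / 7) := mul_le_of_le_one_right (by positivity) hpow
  rw [← sum_range_add_sum_Ico _ (show k + 1 ≤ s + 1 by omega)]
  linarith

lemma neg_le_sum_tau_of_not_dvd (ha : 0 ≤ a) (hb : 0 ≤ b) (hl : 1 ≤ l) (hq : q ≠ 0)
    (hM : Antitone M) (hM0 : ∀ i, 0 < M i) (hu : 8 * (1 + a) * (2 ^ (-b)) ^ L ≤ 1)
    (hs : (3 / 4 : ℝ) ^ s ≤ δ / 4) (hbud : ∀ i, a * (M i : ℝ) ^ (-b) ≤ δ / 8 * (8 / 7) ^ i)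
    (hndvd : ¬ q ∣ levelProd M L s ^ l) :
    -δ ≤ ∑ j ∈ range (s + 1), (3 / 4 : ℝ) ^ j * tau a b l (levelProd M L j) q := by
  have hdl : ∀ j, levelProd M L j ^ l ≠ 0 := fun j => pow_ne_zero l (levelProd_ne_zero M L j)
  obtain ⟨p, hp, hps⟩ := Nat.exists_prime_factorization_lt_of_not_dvd hq (hdl s) hndvd
  have hpj : ∀ j ≤ s, (levelProd M L j ^ l).factorization p < q.factorization p := fun j hj =>
    lt_of_le_of_lt ((Nat.factorization_le_iff_dvd (hdl j) (hdl s)).mpr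
      (pow_dvd_pow_of_dvd (levelProd_dvd_levelProd M L hj) l) p) hps
  set k := Nat.findGreatest (fun i => p ≤ M i) s with hkdef
  have hpM : ∀ i ∈ Icc 1 k, p ≤ M i := fun i hi =>
    (Nat.findGreatest_of_ne_zero hkdef.symm (by simp only [mem_Icc] at hi; omega)).trans
      (hM (mem_Icc.mp hi).2)
  have hks : k ≤ s := Nat.findGreatest_le s
  have hpk : l * (L * k) < q.factorization p := by
    simpa [Nat.factorization_pow, factorization_levelProd hp hpM] using hpj k hks
  rcases hks.eq_or_lt with hks | hks
  · have := neg_le_sum_tau_of_prime ha hb hl hq hp hpM hpk hu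
    rw [hks] at this
    nlinarith [pow_nonneg (by norm_num : (0 : ℝ) ≤ 3 / 4) s]
  · exact neg_le_sum_tau_of_lt_prime ha hb hl hq hM hM0 hu hbud hp hks hpM hpk
      (not_le.mp (Nat.findGreatest_is_greatest (P := fun i => p ≤ M i) (lt_add_one k) hks)) hpj

theorem neg_le_sum_tau_levelProd (ha : 0 ≤ a) (hb : 0 ≤ b) (hl : 1 ≤ l) (hq : q ≠ 0)
    (hM : Antitone M) (hM0 : ∀ i, 0 < M i)
    (hu : 8 * (1 + a) * (2 ^ (-b)) ^ L ≤ 1) (hs : (3 / 4 : ℝ) ^ s ≤ δ / 4)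
    (hbud : ∀ i, a * (M i : ℝ) ^ (-b) ≤ δ / 8 * (8 / 7) ^ i) :
    -δ ≤ ∑ j ∈ range (s + 1), (3 / 4 : ℝ) ^ j * tau a b l (levelProd M L j) q := by
  by_cases hdvd : q ∣ levelProd M L s ^ l
  · exact neg_le_sum_tau_of_dvd ha hb hl hq hM hu hs hdvd
  · exact neg_le_sum_tau_of_not_dvd ha hb hl hq hM hM0 hu hs hbud hdvd

end averaging

noncomputable def primeCutoff (a b δ : ℝ) (i : ℕ) : ℕ :=
  max 2 ⌈(8 * a / δ * (7 / 8) ^ i) ^ (1 / b)⌉₊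

section primeCutoff

variable {a b δ : ℝ}

lemma two_le_primeCutoff (i : ℕ) : 2 ≤ primeCutoff a b δ i := le_max_left _ _

lemma primeCutoff_antitone (ha : 0 ≤ a) (hb : 0 ≤ b) (hδ : 0 ≤ δ) :
    Antitone (primeCutoff a b δ) := fun i j hij =>
  max_le_max le_rfl <| Nat.ceil_mono <| Real.rpow_le_rpow (by positivity)
    (mul_le_mul_of_nonneg_left (pow_le_pow_of_le_one (by norm_num) (by norm_num) hij)
      (by positivity)) (by positivity)

lemma mul_primeCutoff_rpow_neg_le (ha : 0 < a) (hb : 0 < b) (hδ : 0 < δ) (i : ℕ) :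
    a * (primeCutoff a b δ i : ℝ) ^ (-b) ≤ δ / 8 * (8 / 7) ^ i := by
  set y := 8 * a / δ * (7 / 8 : ℝ) ^ i
  have hy : 0 < y := by positivity
  have hyM : y ≤ (primeCutoff a b δ i : ℝ) ^ b := by
    have : y ^ (1 / b) ≤ primeCutoff a b δ i :=
      (Nat.le_ceil _).trans (by exact_mod_cast le_max_right _ _)
    calc y = (y ^ (1 / b)) ^ b := by
          rw [← Real.rpow_mul hy.le, one_div_mul_cancel hb.ne', Real.rpow_one]
      _ ≤ _ := Real.rpow_le_rpow (by positivity) this hb.le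
  have hM : (0 : ℝ) < primeCutoff a b δ i := by
    exact_mod_cast (two_le_primeCutoff i).trans_lt' two_pos
  rw [Real.rpow_neg hM.le, ← div_eq_mul_inv, div_le_iff₀ (by positivity)]
  calc a = δ / 8 * (8 / 7) ^ i * y := by
        simp only [y]
        field_simp
        rw [← mul_pow]
        norm_num
    _ ≤ δ / 8 * (8 / 7) ^ i * (primeCutoff a b δ i : ℝ) ^ b := by gcongr

lemma sum_primeCutoff_le (ha : 0 ≤ a) (hb0 : 0 < b) (hb1 : b ≤ 1) (hδ : 0 < δ) (s : ℕ) :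
    ∑ i ∈ Icc 1 s, (primeCutoff a b δ i : ℝ) ≤ 7 * (8 * a / δ) ^ (1 / b) + 2 * s := by
  have hterm (i : ℕ) : (primeCutoff a b δ i : ℝ) ≤ (8 * a / δ) ^ (1 / b) * (7 / 8) ^ i + 2 := by
    have hrpow : (8 * a / δ * (7 / 8) ^ i) ^ (1 / b) ≤ (8 * a / δ) ^ (1 / b) * (7 / 8) ^ i := by
      rw [Real.mul_rpow (by positivity) (by positivity)]
      gcongr
      calc ((7 / 8 : ℝ) ^ i) ^ (1 / b) ≤ ((7 / 8) ^ i) ^ (1 : ℝ) :=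
            Real.rpow_le_rpow_of_exponent_ge (by positivity)
              (pow_le_one₀ (by norm_num) (by norm_num)) (one_le_one_div hb0 hb1)
        _ = _ := Real.rpow_one _
    have hceil :=
      Nat.ceil_lt_add_one (by positivity : (0 : ℝ) ≤ (8 * a / δ * (7 / 8) ^ i) ^ (1 / b))
    unfold primeCutoff
    push_cast
    have : 0 ≤ (8 * a / δ) ^ (1 / b) * (7 / 8 : ℝ) ^ i := by positivity
    exact max_le (by linarith) (by linarith)
  have hgeom : ∑ i ∈ Icc 1 s, (7 / 8 : ℝ) ^ i ≤ 7 := by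
    rw [← Ico_add_one_right_eq_Icc]
    refine (geom_sum_Ico_le_of_lt_one (by norm_num) (by norm_num)).trans ?_
    norm_num
  calc ∑ i ∈ Icc 1 s, (primeCutoff a b δ i : ℝ)
      ≤ ∑ i ∈ Icc 1 s, ((8 * a / δ) ^ (1 / b) * (7 / 8) ^ i + 2) := sum_le_sum fun i _ => hterm i
    _ = (8 * a / δ) ^ (1 / b) * ∑ i ∈ Icc 1 s, (7 / 8 : ℝ) ^ i + 2 * s := by
        rw [sum_add_distrib, ← mul_sum, sum_const, Nat.card_Icc, nsmul_eq_mul]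
        push_cast
        ring
    _ ≤ 7 * (8 * a / δ) ^ (1 / b) + 2 * s := by
        nlinarith [Real.rpow_nonneg (by positivity : 0 ≤ 8 * a / δ) (1 / b)]

end primeCutoff

lemma three_quarters_pow_ceil_le {δ : ℝ} (hδ : 0 < δ) : (3 / 4 : ℝ) ^ ⌈12 / δ⌉₊ ≤ δ / 4 := by
  have hbern := one_add_mul_le_pow (a := (1 / 3 : ℝ)) (by norm_num) ⌈12 / δ⌉₊
  have hceil := Nat.le_ceil (12 / δ)
  have h : 4 / δ ≤ (4 / 3 : ℝ) ^ ⌈12 / δ⌉₊ := by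
    have : 4 / δ = 12 / δ * (1 / 3) := by ring
    norm_num at hbern ⊢
    nlinarith
  rw [show (3 / 4 : ℝ) = (4 / 3)⁻¹ by norm_num, inv_pow,
    inv_le_comm₀ (by positivity) (by positivity), inv_div]
  exact h

lemma ceil_twelve_div_le {b δ : ℝ} (hb0 : 0 < b) (hb1 : b ≤ 1) (hδ0 : 0 < δ) (hδ1 : δ ≤ 1) :
    (⌈12 / δ⌉₊ : ℝ) ≤ 13 * δ ^ (-(1 / b)) := by
  have h1 : δ⁻¹ ≤ δ ^ (-(1 / b)) := by
    rw [← Real.rpow_neg_one]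
    exact Real.rpow_le_rpow_of_exponent_ge hδ0 hδ1 (neg_le_neg (one_le_one_div hb0 hb1))
  have h2 := Nat.ceil_lt_add_one (by positivity : (0 : ℝ) ≤ 12 / δ)
  have h3 : 1 ≤ δ⁻¹ := one_le_inv_iff₀.mpr ⟨hδ0, hδ1⟩
  rw [div_eq_mul_inv] at h2 ⊢
  linarith

lemma levelProd_primeCutoff_le {a b δ : ℝ} (ha : 0 ≤ a) (hb0 : 0 < b) (hb1 : b ≤ 1)
    (hδ0 : 0 < δ) (hδ1 : δ ≤ 1) (L : ℕ) :
    (levelProd (primeCutoff a b δ) L ⌈12 / δ⌉₊ : ℝ) ≤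
      Real.exp (Real.log 4 * L * (7 * (8 * a) ^ (1 / b) + 26) * δ ^ (-(1 / b))) := by
  set s := ⌈12 / δ⌉₊
  have hsum : ∑ i ∈ Icc 1 s, (primeCutoff a b δ i : ℝ) ≤
      (7 * (8 * a) ^ (1 / b) + 26) * δ ^ (-(1 / b)) := by
    have h := sum_primeCutoff_le ha hb0 hb1 hδ0 s
    rw [Real.div_rpow (by positivity) hδ0.le, div_eq_mul_inv, ← Real.rpow_neg hδ0.le] at h
    nlinarith [ceil_twelve_div_le hb0 hb1 hδ0 hδ1]
  calc (levelProd (primeCutoff a b δ) L s : ℝ)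
      ≤ ((4 ^ (L * ∑ i ∈ Icc 1 s, primeCutoff a b δ i) : ℕ) : ℝ) := by
        exact_mod_cast levelProd_le_four_pow _ _ _
    _ = Real.exp (Real.log 4 * L * ∑ i ∈ Icc 1 s, (primeCutoff a b δ i : ℝ)) := by
        rw [Nat.cast_pow, ← Real.rpow_natCast, Real.rpow_def_of_pos (by norm_num)]
        push_cast
        ring_nf
    _ ≤ _ := by
        rw [mul_assoc _ _ (δ ^ _)]
        gcongr

lemma exists_pow_two_rpow_neg_le {a b : ℝ} (ha : 0 ≤ a) (hb : 0 < b) :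
    ∃ L : ℕ, 1 ≤ L ∧ 8 * (1 + a) * ((2 : ℝ) ^ (-b)) ^ L ≤ 1 := by
  have h0 : 0 < (2 : ℝ) ^ (-b) := by positivity
  have h1 : (2 : ℝ) ^ (-b) < 1 := Real.rpow_lt_one_of_one_lt_of_neg (by norm_num) (by linarith)
  obtain ⟨n, hn⟩ := exists_pow_lt_of_lt_one (by positivity : 0 < 1 / (8 * (1 + a))) h1
  refine ⟨n + 1, by omega, ?_⟩
  rw [← le_div_iff₀' (by positivity)]
  exact ((pow_le_pow_of_le_one h0.le h1.le (Nat.le_succ n)).trans hn.le)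

lemma neg_le_inv_mul_of_neg_le {δ Λ S : ℝ} (hδ : 0 ≤ δ) (hΛ : 1 ≤ Λ) (hS : -δ ≤ S) :
    -δ ≤ Λ⁻¹ * S := by
  have h0 : 0 < Λ⁻¹ := inv_pos.mpr (by linarith)
  have h1 : Λ⁻¹ ≤ 1 := inv_le_one_of_one_le₀ hΛ
  nlinarith

/-- averaging theorem. -/
theorem stmt_13 (a b : ℝ) (l : ℕ) (ha : 0 < a) (hb0 : 0 < b) (hb1 : b < 1) (hl : 1 ≤ l) :
    ∃ c1 : ℝ, 0 < c1 ∧ ∀ δ : ℝ, 0 < δ → δ ≤ 1 →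
      ∃ s : ℕ, 0 < s ∧ ∃ d : ℕ → ℕ,
        d 0 = 1 ∧ (∀ j, j < s → d j < d (j + 1)) ∧
        (d s : ℝ) ≤ Real.exp (c1 * δ ^ (-(1 / b))) ∧
        ∃ lam : ℝ, 0 < lam ∧ ∀ q : ℕ, 1 ≤ q →
          -δ ≤ (∑ j ∈ Finset.range (s + 1), lam ^ j)⁻¹ *
              ∑ j ∈ Finset.range (s + 1), lam ^ j * tau a b l (d j) q := by
  obtain ⟨L, hL, hu⟩ := exists_pow_two_rpow_neg_le ha.le hb0
  refine ⟨Real.log 4 * L * (7 * (8 * a) ^ (1 / b) + 26), by positivity, fun δ hδ0 hδ1 => ?_⟩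
  refine ⟨⌈12 / δ⌉₊, by positivity, levelProd (primeCutoff a b δ) L, levelProd_zero _ _,
    fun j _ => levelProd_lt_levelProd_succ hL two_le_primeCutoff j,
    levelProd_primeCutoff_le ha.le hb0 hb1.le hδ0 hδ1 L, 3 / 4, by norm_num, fun q hq => ?_⟩
  have hΛ : 1 ≤ ∑ j ∈ range (⌈12 / δ⌉₊ + 1), (3 / 4 : ℝ) ^ j := by
    simpa using single_le_sum (f := fun j => (3 / 4 : ℝ) ^ j) (fun j _ => by positivity)
      (mem_range.mpr (Nat.succ_pos _))
  exact neg_le_inv_mul_of_neg_le hδ0.le hΛ <| neg_le_sum_tau_levelProd ha.le hb0.le hl (by omega)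
    (primeCutoff_antitone ha.le hb0.le hδ0.le) (fun i => two_pos.trans_le (two_le_primeCutoff i))
    hu (three_quarters_pow_ceil_le hδ0) (mul_primeCutoff_rpow_neg_le ha hb0 hδ0)
end

section
/- Fix reals α > 0 and 0 < β < 1 and an integer l ≥ 1, and define τ*(p^j, p^k) = 1 if k ≤ jl, and τ*(p^j, p^k) = −α p^{−β(k − jl)} otherwise. Let p be a prime and μ a real constant with 1 > μ ≥ (α + 1)/(α + p^β). Then for any positive integers s and k, ∑_{j=0}^{s} μ^j τ*(p^j, p^k) ≥ −μ^{s+1}/(1 − μ). -/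
/-- `τ*(p^j, p^k) = 1` if `k ≤ jl`, and `−a p^{−b(k − jl)}` otherwise. -/
noncomputable def taustar (a b : ℝ) (l p j k : ℕ) : ℝ :=
  if k ≤ j * l then 1
  else -(a * (p : ℝ) ^ (-(b * ((k : ℝ) - (j : ℝ) * (l : ℝ)))))

/-!
With `w_j = p^{-b max(k - jl, 0)}` one has `(1 - μ) τ*(p^j, p^k) ≥ w_j - μ w_{j+1}` for every
`j`: with equality when `k ≤ jl` (both weights are `1`), and otherwise because
`w_{j+1} ≥ p^b w_j` (as `l ≥ 1`) while the hypothesis on `μ` reads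
`a (1 - μ) ≤ μ p^b - 1`.
Multiplying by `μ^j` and summing telescopes to
`(1 - μ) ∑_{j ≤ s} μ^j τ* ≥ w_0 - μ^{s+1} w_{s+1} ≥ -μ^{s+1}`, as `0 ≤ w ≤ 1`.
-/

noncomputable def taustarWeight (b : ℝ) (l p j k : ℕ) : ℝ :=
  (p : ℝ) ^ (-(b * max ((k : ℝ) - (j : ℝ) * (l : ℝ)) 0))

section

variable {a b μ : ℝ} {l p j k : ℕ}

theorem taustarWeight_nonneg : 0 ≤ taustarWeight b l p j k :=
  Real.rpow_nonneg (Nat.cast_nonneg p) _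

theorem taustarWeight_le_one (hp : 1 ≤ (p : ℝ)) (hb : 0 ≤ b) :
    taustarWeight b l p j k ≤ 1 :=
  Real.rpow_le_one_of_one_le_of_nonpos hp
    (neg_nonpos.mpr (mul_nonneg hb (le_max_right _ _)))

theorem taustarWeight_of_le (h : k ≤ j * l) : taustarWeight b l p j k = 1 := by
  have : (k : ℝ) - j * l ≤ 0 := sub_nonpos.mpr (by exact_mod_cast h)
  simp [taustarWeight, max_eq_right this]

theorem taustar_of_lt (h : j * l < k) :
    taustar a b l p j k = -(a * taustarWeight b l p j k) := by
  have : 0 ≤ (k : ℝ) - j * l := sub_nonneg.mpr (by exact_mod_cast h.le)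
  simp [taustar, taustarWeight, not_le.mpr h, max_eq_left this]

theorem rpow_mul_taustarWeight_le_succ (hl : 1 ≤ l) (hp : 1 ≤ (p : ℝ)) (hb : 0 ≤ b)
    (h : j * l < k) :
    (p : ℝ) ^ b * taustarWeight b l p j k ≤ taustarWeight b l p (j + 1) k := by
  have hjl : (j : ℝ) * l + 1 ≤ k := by exact_mod_cast h
  have hl' : (1 : ℝ) ≤ l := by exact_mod_cast hl
  have hmax : max ((k : ℝ) - (j + 1 : ℕ) * l) 0 ≤ (k - j * l) - 1 := by
    push_cast
    exact max_le (by linarith) (by linarith)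
  rw [taustarWeight, taustarWeight, max_eq_left (by linarith), ← Real.rpow_add (by linarith)]
  exact Real.rpow_le_rpow_of_exponent_le hp (by nlinarith)

theorem taustarWeight_sub_le_taustar (hl : 1 ≤ l) (hp : 1 ≤ (p : ℝ)) (hb : 0 ≤ b)
    (hμ0 : 0 ≤ μ) (hμ : a * (1 - μ) ≤ μ * (p : ℝ) ^ b - 1) :
    taustarWeight b l p j k - μ * taustarWeight b l p (j + 1) k ≤
      (1 - μ) * taustar a b l p j k := by
  rcases le_or_gt k (j * l) with h | h
  · have h' : k ≤ (j + 1) * l := h.trans (Nat.mul_le_mul_right l j.le_succ)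
    simp [taustar, h, taustarWeight_of_le h, taustarWeight_of_le h']
  · have hw := rpow_mul_taustarWeight_le_succ hl hp hb h
    have hw0 : 0 ≤ taustarWeight b l p j k := taustarWeight_nonneg
    rw [taustar_of_lt h]
    nlinarith [mul_le_mul_of_nonneg_left hw hμ0, mul_le_mul_of_nonneg_right hμ hw0]

end

theorem sub_pow_mul_le_mul_sum_pow_mul {μ : ℝ} (hμ : 0 ≤ μ) {f g : ℕ → ℝ}
    (h : ∀ j, g j - μ * g (j + 1) ≤ (1 - μ) * f j) (n : ℕ) :
    g 0 - μ ^ n * g n ≤ (1 - μ) * ∑ j ∈ Finset.range n, μ ^ j * f j := by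
  calc g 0 - μ ^ n * g n = ∑ j ∈ Finset.range n, μ ^ j * (g j - μ * g (j + 1)) := by
        rw [Finset.sum_congr rfl fun j _ => show μ ^ j * (g j - μ * g (j + 1)) =
          μ ^ j * g j - μ ^ (j + 1) * g (j + 1) by ring, Finset.sum_range_sub']
        simp
    _ ≤ ∑ j ∈ Finset.range n, μ ^ j * ((1 - μ) * f j) :=
        Finset.sum_le_sum fun j _ => mul_le_mul_of_nonneg_left (h j) (pow_nonneg hμ j)
    _ = (1 - μ) * ∑ j ∈ Finset.range n, μ ^ j * f j := by
        rw [Finset.mul_sum]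
        exact Finset.sum_congr rfl fun j _ => by ring

theorem stmt_14_general (a b : ℝ) (l : ℕ) (ha : 0 < a) (hb0 : 0 < b) (hl : 1 ≤ l)
    (p : ℕ) (hp : p.Prime) (μ : ℝ) (hμ1 : μ < 1)
    (hμ2 : (a + 1) / (a + (p : ℝ) ^ b) ≤ μ) :
    ∀ s k : ℕ, 1 ≤ s → 1 ≤ k →
      -(μ ^ (s + 1) / (1 - μ)) ≤
        ∑ j ∈ Finset.range (s + 1), μ ^ j * taustar a b l p j k := by
  intro s k _ _
  have hp1 : (1 : ℝ) ≤ p := by exact_mod_cast hp.one_lt.le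
  have hden : 0 < a + (p : ℝ) ^ b := by positivity
  have hμ0 : 0 ≤ μ := (div_nonneg (by linarith) hden.le).trans hμ2
  have hμ : a * (1 - μ) ≤ μ * (p : ℝ) ^ b - 1 := by
    have := (div_le_iff₀ hden).mp hμ2
    linarith
  have htel := sub_pow_mul_le_mul_sum_pow_mul hμ0
    (fun j => taustarWeight_sub_le_taustar (j := j) (k := k) hl hp1 hb0.le hμ0 hμ) (s + 1)
  have hw0 : 0 ≤ taustarWeight b l p 0 k := taustarWeight_nonneg
  have hws : taustarWeight b l p (s + 1) k ≤ 1 := taustarWeight_le_one hp1 hb0.le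
  rw [← neg_div, div_le_iff₀ (sub_pos.mpr hμ1)]
  calc -μ ^ (s + 1)
        ≤ taustarWeight b l p 0 k - μ ^ (s + 1) * taustarWeight b l p (s + 1) k := by
        linarith [mul_le_mul_of_nonneg_left hws (pow_nonneg hμ0 (s + 1))]
    _ ≤ _ := by linarith

/-- If `p` is a prime and `1 > μ ≥ (a + 1)/(a + p^b)`, then for all
positive integers `s, k`: `∑_{j=0}^{s} μ^j τ*(p^j, p^k) ≥ −μ^{s+1}/(1 − μ)`. -/
theorem stmt_14 (a b : ℝ) (l : ℕ) (ha : 0 < a) (hb0 : 0 < b) (hb1 : b < 1) (hl : 1 ≤ l)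
    (p : ℕ) (hp : p.Prime) (μ : ℝ) (hμ1 : μ < 1)
    (hμ2 : (a + 1) / (a + (p : ℝ) ^ b) ≤ μ) :
    ∀ s k : ℕ, 1 ≤ s → 1 ≤ k →
      -(μ ^ (s + 1) / (1 - μ)) ≤
        ∑ j ∈ Finset.range (s + 1), μ ^ j * taustar a b l p j k :=
  stmt_14_general a b l ha hb0 hl p hp μ hμ1 hμ2
end

section
/- Fix reals α > 0 and 0 < β < 1 and an integer l ≥ 1, and define τ(d, q) = 1 if q divides d^l, and τ(d, q) = max{−α r^{−β}, −1} otherwise, where r = q / gcd(q, d^l). Let d_0, d_1, ..., d_s be positive integers such that d_j divides d_{j+1} for each 0 ≤ j < s. Then for each positive integer q there exists a prime p such that for all 0 ≤ j ≤ s, τ(d_j, q) ≥ τ(p^{a_j}, p^{k}), where p^{a_j} is the exact power of p dividing d_j and p^{k} is the exact power of p dividing q. -/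
lemma tau_le_one (a b : ℝ) (l d q : ℕ) (ha : 0 < a) : tau a b l d q ≤ 1 := by
  unfold tau
  split
  · exact le_refl 1
  · apply max_le _ (by norm_num)
    have h0 : (0:ℝ) ≤ a * ((q / Nat.gcd q (d ^ l) : ℕ) : ℝ) ^ (-b) :=
      mul_nonneg ha.le (Real.rpow_nonneg (Nat.cast_nonneg _) _)
    linarith

/-- If `d₀, d₁, ..., d_s` are positive integers with `d_j ∣ d_{j+1}`,
then for each positive integer `q` there is a prime `p` such that for all `j ≤ s`,
`τ(d_j, q) ≥ τ(p^{v_p(d_j)}, p^{v_p(q)})`. -/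
theorem stmt_17 (a b : ℝ) (l : ℕ) (ha : 0 < a) (hb0 : 0 < b) (hb1 : b < 1) (hl : 1 ≤ l)
    (s : ℕ) (d : ℕ → ℕ) (hpos : ∀ j ≤ s, 0 < d j)
    (hdvd : ∀ j, j < s → d j ∣ d (j + 1)) :
    ∀ q : ℕ, 1 ≤ q → ∃ p : ℕ, p.Prime ∧ ∀ j ≤ s,
      tau a b l (p ^ ((d j).factorization p)) (p ^ (q.factorization p)) ≤
        tau a b l (d j) q := by
  intro q hq
  have hq0 : q ≠ 0 := by omega
  -- chain divisibility
  have hchain : ∀ i j, i ≤ j → j ≤ s → d i ∣ d j := by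
    intro i j hij hjs
    induction j with
    | zero => simpa [Nat.le_zero.mp hij] using dvd_refl (d 0)
    | succ n ih =>
      rcases Nat.lt_or_ge i (n+1) with h | h
      · exact (ih (by omega) (by omega)).trans (hdvd n (by omega))
      · have : i = n + 1 := by omega
        simp [this]
  set S : Finset ℕ := (Finset.range (s+1)).filter (fun j => ¬ q ∣ (d j)^l) with hS
  by_cases hSne : S.Nonempty
  · set M := S.max' hSne with hM
    have hMmem : M ∈ S := S.max'_mem hSne
    have hMs : M ≤ s := by
      have := (Finset.mem_filter.mp hMmem).1
      simpa [Nat.lt_succ_iff] using Finset.mem_range.mp this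
    have hMnd : ¬ q ∣ (d M)^l := (Finset.mem_filter.mp hMmem).2
    have hdM0 : d M ≠ 0 := (hpos M hMs).ne'
    have hdMl0 : (d M)^l ≠ 0 := pow_ne_zero _ hdM0
    -- find a prime p with l * v_p(d M) < v_p(q)
    have hnle : ¬ q.factorization ≤ ((d M)^l).factorization := by
      intro h
      exact hMnd ((Nat.factorization_le_iff_dvd hq0 hdMl0).mp h)
    rw [Finsupp.le_iff] at hnle
    push_neg at hnle
    obtain ⟨p, hpsupp, hplt⟩ := hnle
    have hpp : p.Prime := Nat.prime_of_mem_primeFactors (by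
      simpa [Nat.support_factorization] using hpsupp)
    have hkey : l * (d M).factorization p < q.factorization p := by
      have : ((d M)^l).factorization p = l * (d M).factorization p := by
        rw [Nat.factorization_pow]; simp
      omega
    refine ⟨p, hpp, ?_⟩
    intro j hjs
    by_cases hjd : q ∣ (d j)^l
    · have : tau a b l (d j) q = 1 := by unfold tau; simp [hjd]
      rw [this]
      exact tau_le_one a b l _ _ ha
    · -- j ∈ S so j ≤ M
      have hjM : j ≤ M := S.le_max' j (Finset.mem_filter.mpr ⟨Finset.mem_range.mpr (by omega), hjd⟩)
      have hdj0 : d j ≠ 0 := (hpos j hjs).ne'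
      have hdjl0 : (d j)^l ≠ 0 := pow_ne_zero _ hdj0
      have hdjM : d j ∣ d M := hchain j M hjM hMs
      have hvle : (d j).factorization p ≤ (d M).factorization p := by
        have := (Nat.factorization_le_iff_dvd hdj0 hdM0).mpr hdjM
        exact this p
      set k := q.factorization p with hk
      set D := (d j).factorization p with hD
      have hm : l * D < k := lt_of_le_of_lt (Nat.mul_le_mul_left l hvle) hkey
      -- compute the LHS tau
      have hpow : (p ^ D)^l = p ^ (l * D) := by rw [← pow_mul, mul_comm]
      have hnd : ¬ p ^ k ∣ (p ^ D)^l := by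
        rw [hpow, Nat.pow_dvd_pow_iff_le_right hpp.one_lt]
        omega
      have hgcd : Nat.gcd (p ^ k) ((p ^ D)^l) = p ^ (l * D) := by
        rw [hpow]
        exact Nat.gcd_eq_right (pow_dvd_pow p hm.le)
      have hdivL : p ^ k / Nat.gcd (p ^ k) ((p ^ D)^l) = p ^ (k - l * D) := by
        rw [hgcd, Nat.pow_div hm.le hpp.pos]
      -- the RHS r
      set g := Nat.gcd q ((d j)^l) with hg
      have hgq : g ∣ q := Nat.gcd_dvd_left _ _
      have hg0 : g ≠ 0 := Nat.gcd_ne_zero_left hq0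
      set r := q / g with hr
      have hr0 : 0 < r := Nat.div_pos (Nat.le_of_dvd (by omega) hgq) (Nat.pos_of_ne_zero hg0)
      -- v_p(r) = k - l*D
      have hvr : r.factorization p = k - l * D := by
        rw [hr, Nat.factorization_div hgq, Finsupp.tsub_apply]
        have hgf : g.factorization p = l * D := by
          rw [hg, Nat.factorization_gcd hq0 hdjl0, Finsupp.inf_apply,
            Nat.factorization_pow]
          simp only [Finsupp.smul_apply, smul_eq_mul]
          rw [← hk, ← hD]
          omega
        rw [hgf]
      have hrdvd : p ^ (k - l * D) ∣ r := by
        rw [← hvr]; exact Nat.ordProj_dvd r p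
      have hrle : p ^ (k - l * D) ≤ r := Nat.le_of_dvd hr0 hrdvd
      -- now compare taus
      unfold tau
      rw [if_neg hnd, if_neg hjd, hdivL]
      apply max_le _ (le_max_right _ _)
      have hple : ((p ^ (k - l * D) : ℕ) : ℝ) ≤ ((r : ℕ) : ℝ) := by exact_mod_cast hrle
      have hppos : (0:ℝ) < ((p ^ (k - l * D) : ℕ) : ℝ) := by
        exact_mod_cast pow_pos hpp.pos _
      have hrpow : ((r : ℕ) : ℝ) ^ (-b) ≤ ((p ^ (k - l * D) : ℕ) : ℝ) ^ (-b) :=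
        Real.rpow_le_rpow_of_nonpos hppos hple (by linarith)
      have : -(a * ((r : ℕ) : ℝ) ^ (-b)) ≥ -(a * ((p ^ (k - l * D) : ℕ) : ℝ) ^ (-b)) := by
        have := mul_le_mul_of_nonneg_left hrpow ha.le
        linarith
      exact le_trans this (le_max_left _ _)
  · -- every j satisfies q ∣ (d j)^l, tau (d j) q = 1
    refine ⟨2, Nat.prime_two, ?_⟩
    intro j hjs
    have hjd : q ∣ (d j)^l := by
      by_contra h
      exact hSne ⟨j, Finset.mem_filter.mpr ⟨Finset.mem_range.mpr (by omega), h⟩⟩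
    have : tau a b l (d j) q = 1 := by unfold tau; simp [hjd]
    rw [this]
    exact tau_le_one a b l _ _ ha
end
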